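/- arXiv:1711.07909 — 4 statements merged into one kernel-verified Lean document; each statement's English description precedes it below -/
import Mathlib

section
/- Let n ∈ ℕ and let n̄ be a partition of n (a multiset of positive integers summing to n). Then the number of permutations σ of Fin n whose full cycle type equals n̄ is exactly n!/δ(n̄). Equivalently, the conjugacy class in S_n of any permutation with full cycle type n̄ has cardinality n!/∏_{j=1}^{n} a_j!·j^{a_j}, where a_j is the number of parts of n̄ equal to j. -/
/-!
The full cycle type of `σ` is its Mathlib `cycleType` (the cycle lengths `≥ 2`) padded with
ones, so `fullCycleType σ = n̄` exactly when `σ.cycleType` is the part `m` of `n̄` with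
entries `≥ 2`. If `n̄` has `k` ones, then `δ(n̄) = k! · δ(m)`, which is the order of the
centralizer of a permutation of cycle type `m`; orbit–stabilizer for the conjugation action
(`Equiv.Perm.card_of_cycleType_mul_eq`) gives `#{σ | fullCycleType σ = n̄} · δ(n̄) = n!`.
-/

/-- The full cycle type of a permutation: the multiset of cycle lengths in its
disjoint cycle decomposition, with each fixed point counted as a cycle of length 1. -/
def fullCycleType {n : ℕ} (σ : Equiv.Perm (Fin n)) : Multiset ℕ :=
  σ.cycleType + Multiset.replicate (n - σ.support.card) 1

/-- `δ` of a partition, given as the multiset of its parts: if the partition has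
`a_j` parts of size `j`, then `δ = ∏_j a_j! · j^{a_j}`. -/
def partDelta (m : Multiset ℕ) : ℕ :=
  m.prod * ∏ j ∈ m.toFinset, (m.count j).factorial

open Equiv Finset Nat

theorem partDelta_add_replicate_one {m : Multiset ℕ} (hm : 1 ∉ m) (k : ℕ) :
    partDelta (m + Multiset.replicate k 1) = k ! * partDelta m := by
  rcases Nat.eq_zero_or_pos k with rfl | hk
  · simp
  have hcount : ∀ j ∈ m.toFinset, (m + Multiset.replicate k 1).count j = m.count j := by
    intro j hj
    rw [Multiset.count_add, Multiset.count_replicate, if_neg, add_zero]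
    rintro rfl
    exact hm (Multiset.mem_toFinset.mp hj)
  have hdisj : Disjoint m.toFinset {1} := by simpa using hm
  rw [partDelta, partDelta, Multiset.toFinset_add, Multiset.toFinset_replicate, if_neg hk.ne',
    prod_union hdisj, prod_congr rfl fun j hj => by rw [hcount j hj], prod_singleton,
    Multiset.count_add, Multiset.count_eq_zero.mpr hm, Multiset.count_replicate_self, zero_add,
    Multiset.prod_add, Multiset.prod_replicate, one_pow, mul_one]
  ring

theorem Multiset.filter_two_le_add_replicate_one {μ : Multiset ℕ} (hμ : ∀ a ∈ μ, 0 < a) :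
    μ.filter (2 ≤ ·) + replicate (μ.sum - (μ.filter (2 ≤ ·)).sum) 1 = μ := by
  have hones : μ.filter (¬ 2 ≤ ·) = replicate (card (μ.filter (¬ 2 ≤ ·))) 1 := by
    refine eq_replicate_card.mpr fun b hb => ?_
    have hb_pos := hμ b (mem_of_mem_filter hb)
    have hb_lt := (mem_filter.mp hb).2
    omega
  have hsum : μ.sum = (μ.filter (2 ≤ ·)).sum + card (μ.filter (¬ 2 ≤ ·)) := by
    conv_lhs => rw [← filter_add_not (2 ≤ ·) μ, sum_add, hones]
    simp
  conv_rhs => rw [← filter_add_not (2 ≤ ·) μ, hones]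
  rw [hsum, Nat.add_sub_cancel_left]

theorem Nat.Partition.filter_two_le_add_replicate_one {n : ℕ} (P : n.Partition) :
    P.parts.filter (2 ≤ ·) + Multiset.replicate (n - (P.parts.filter (2 ≤ ·)).sum) 1 =
      P.parts := by
  simpa [P.parts_sum] using Multiset.filter_two_le_add_replicate_one fun a ha => P.parts_pos ha

theorem Equiv.Perm.filter_two_le_fullCycleType {n : ℕ} (σ : Perm (Fin n)) :
    (fullCycleType σ).filter (2 ≤ ·) = σ.cycleType := by
  rw [fullCycleType, Multiset.filter_add,
    Multiset.filter_eq_self.mpr fun a ha => two_le_of_mem_cycleType ha,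
    Multiset.filter_eq_nil.mpr fun a ha => by rw [Multiset.eq_of_mem_replicate ha]; omega,
    add_zero]

theorem Equiv.Perm.fullCycleType_eq_iff {n : ℕ} (σ : Perm (Fin n)) (P : n.Partition) :
    fullCycleType σ = P.parts ↔ σ.cycleType = P.parts.filter (2 ≤ ·) := by
  refine ⟨fun h => by rw [← filter_two_le_fullCycleType, h], fun h => ?_⟩
  rw [fullCycleType, ← sum_cycleType, h, P.filter_two_le_add_replicate_one]

theorem card_fullCycleType_mul_partDelta {n : ℕ} (P : n.Partition) :
    #{σ : Perm (Fin n) | fullCycleType σ = P.parts} * partDelta P.parts = n ! := by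
  set m := P.parts.filter (2 ≤ ·)
  have hm : m.sum ≤ n ∧ ∀ a ∈ m, 2 ≤ a := by
    refine ⟨?_, fun a ha => (Multiset.mem_filter.mp ha).2⟩
    calc m.sum ≤ m.sum + (P.parts.filter (¬ 2 ≤ ·)).sum := Nat.le_add_right _ _
      _ = n := by rw [← Multiset.sum_add, Multiset.filter_add_not, P.parts_sum]
  have hδ : partDelta P.parts = (n - m.sum)! * partDelta m := by
    conv_lhs => rw [← P.filter_two_le_add_replicate_one]
    exact partDelta_add_replicate_one (fun h => by simpa using (Multiset.mem_filter.mp h).2) _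
  have := Perm.card_of_cycleType_mul_eq (Fin n) m
  simp only [Fintype.card_fin, if_pos hm] at this
  simp only [Perm.fullCycleType_eq_iff]
  rwa [hδ, partDelta, ← mul_assoc _ m.prod]

/-- **Size of a conjugacy class in `S_n`.** The number of permutations of `Fin n`
with full cycle type a given partition `n̄` of `n` is exactly `n!/δ(n̄)`
(in particular `δ(n̄)` divides `n!`). -/
theorem card_perm_with_fullCycleType (n : ℕ) (P : Nat.Partition n) :
    partDelta P.parts ∣ n.factorial ∧
      (Finset.univ.filter
          (fun σ : Equiv.Perm (Fin n) => fullCycleType σ = P.parts)).card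
        = n.factorial / partDelta P.parts := by
  have key := card_fullCycleType_mul_partDelta P
  have hδ : 0 < partDelta P.parts := Nat.pos_of_mul_pos_left (key ▸ n.factorial_pos)
  exact ⟨Dvd.intro_left _ key, (Nat.div_eq_of_eq_mul_left hδ key.symm).symm⟩
end

section
/- Let R be a commutative ring, n ∈ ℕ, λ ∈ R, σ a permutation of Fin n, and ε : Fin n → {1,−1} ⊆ R. Then det(I_n − λ·D_ε·M_σ) = ∏_{c} (1 − s(c)·λ^{ℓ(c)}), where the product is over the cycles c of σ (fixed points counted as cycles of length 1), ℓ(c) is the length of c, and s(c) = ∏_{i ∈ c} ε(i) is the sign of the cycle c. -/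
/-!
Expand the determinant of the transpose by the Leibniz formula. The term of a permutation `ρ`
vanishes unless each point is fixed by `ρ` or moved by `ρ` as by `σ`, which says exactly that
the cycles of `ρ` are cycles of `σ`; so the surviving `ρ` correspond to the subsets `S` of the
cycles of `σ`. For such `ρ` the sign `-(-1)^ℓ` of each cycle absorbs the `(-λ)^ℓ` of its matrix
entries, and the term is `∏_{c ∈ S} (-s(c) λ^ℓ(c))` times the diagonal entries `1 - ε i λ` at
the fixed points of `σ`. Summing over `S` is expanding the product `∏_c (1 - s(c) λ^ℓ(c))`.
-/

open Equiv Finset Matrix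

namespace Equiv.Perm

variable {α : Type*} [Fintype α] [DecidableEq α]

theorem cycleFactorsFinset_subset_iff {ρ σ : Perm α} :
    ρ.cycleFactorsFinset ⊆ σ.cycleFactorsFinset ↔ ∀ x, ρ x = x ∨ ρ x = σ x := by
  constructor
  · intro h x
    refine or_iff_not_imp_left.2 fun hx => ?_
    have hmem := h (cycleOf_mem_cycleFactorsFinset_iff.2 (mem_support.2 hx))
    rw [← cycleOf_apply_self]
    exact (mem_cycleFactorsFinset_iff.1 hmem).2 x
      (mem_support_cycleOf_iff.2 ⟨.refl _ _, mem_support.2 hx⟩)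
  · intro h c hc
    obtain ⟨hcyc, hcρ⟩ := mem_cycleFactorsFinset_iff.1 hc
    refine mem_cycleFactorsFinset_iff.2 ⟨hcyc, fun a ha => ?_⟩
    rw [hcρ a ha]
    refine (h a).resolve_left fun hfix => mem_support.1 ha ?_
    rw [hcρ a ha, hfix]

theorem exists_cycleFactorsFinset_eq {σ : Perm α} {S : Finset (Perm α)}
    (hS : S ⊆ σ.cycleFactorsFinset) : ∃ ρ : Perm α, ρ.cycleFactorsFinset = S := by
  have hdisj : (S : Set (Perm α)).Pairwise Disjoint :=
    σ.cycleFactorsFinset_pairwise_disjoint.mono (coe_subset.2 hS)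
  exact ⟨_, cycleFactorsFinset_eq_finset.2
    ⟨fun c hc => (mem_cycleFactorsFinset_iff.1 (hS hc)).1, hdisj, rfl⟩⟩

theorem support_eq_biUnion_cycleFactorsFinset (ρ : Perm α) :
    ρ.support = ρ.cycleFactorsFinset.biUnion support := by
  conv_lhs => rw [← ρ.cycleFactorsFinset_noncommProd]
  exact support_noncommProd ρ.cycleFactorsFinset_pairwise_disjoint

theorem sign_eq_prod_cycleFactorsFinset (ρ : Perm α) :
    sign ρ = ∏ c ∈ ρ.cycleFactorsFinset, sign c := by
  conv_lhs => rw [← ρ.cycleFactorsFinset_noncommProd]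
  rw [map_noncommProd, noncommProd_eq_prod]
  rfl

theorem IsCycle.sign_mul_prod_neg {R : Type*} [CommRing R] {c : Perm α} (hc : c.IsCycle)
    (f : α → R) : ((Perm.sign c : ℤ) : R) * ∏ i ∈ c.support, -f i = -∏ i ∈ c.support, f i := by
  rw [hc.sign, prod_neg]
  push_cast
  rw [neg_mul, ← mul_assoc, ← mul_pow]
  norm_num

end Equiv.Perm

section SignedPermMatrix

variable {R : Type*} [CommRing R] {α : Type*} [Fintype α] [DecidableEq α]
  (lam : R) (ε : α → R) (σ : Perm α)

theorem one_sub_smul_diagonal_mul_permMatrix_apply (i j : α) :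
    (1 - lam • (diagonal ε * σ.permMatrix R)) i j =
      (if i = j then 1 else 0) - if σ i = j then lam * ε i else 0 := by
  simp [one_apply, diagonal_mul, PEquiv.toMatrix_apply, mul_ite]

theorem prod_one_sub_smul_diagonal_mul_permMatrix_apply {ρ : Perm α}
    (hρ : ∀ x, ρ x = x ∨ ρ x = σ x) :
    ∏ i, (1 - lam • (diagonal ε * σ.permMatrix R)) i (ρ i) =
      (∏ i ∈ ρ.support, -(lam * ε i)) * ∏ i ∈ univ \ σ.support, (1 - ε i * lam) := by
  have hentry : ∀ i, (1 - lam • (diagonal ε * σ.permMatrix R)) i (ρ i) =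
      (if i ∈ ρ.support then -(lam * ε i) else 1) *
        if i ∈ univ \ σ.support then 1 - ε i * lam else 1 := by
    intro i
    rw [one_sub_smul_diagonal_mul_permMatrix_apply]
    rcases hρ i with hfix | hmove
    · by_cases hσ : σ i = i <;> simp [hfix, hσ, mul_comm]
    · by_cases hρi : ρ i = i
      · have hσ : σ i = i := hmove ▸ hρi
        simp [hρi, hσ, mul_comm]
      · have hσ : σ i ≠ i := hmove ▸ hρi
        simp [hσ, hmove, Ne.symm hσ]
  simp only [hentry, prod_mul_distrib, prod_ite_mem, univ_inter]

theorem one_sub_smul_diagonal_mul_permMatrix_apply_eq_zero {i j : α} (hij : i ≠ j)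
    (hσ : σ i ≠ j) : (1 - lam • (diagonal ε * σ.permMatrix R)) i j = 0 := by
  rw [one_sub_smul_diagonal_mul_permMatrix_apply, if_neg hij, if_neg hσ, sub_zero]

theorem sign_smul_prod_one_sub_smul_diagonal_mul_permMatrix_apply {ρ : Perm α}
    (hρ : ρ.cycleFactorsFinset ⊆ σ.cycleFactorsFinset) :
    Perm.sign ρ • ∏ i, (1 - lam • (diagonal ε * σ.permMatrix R)) i (ρ i) =
      (∏ c ∈ ρ.cycleFactorsFinset, -((∏ i ∈ c.support, ε i) * lam ^ #c.support)) *
        ∏ i ∈ univ \ σ.support, (1 - ε i * lam) := by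
  have hcycle : ∀ c ∈ ρ.cycleFactorsFinset,
      ((Perm.sign c : ℤ) : R) * ∏ i ∈ c.support, -(lam * ε i) =
        -((∏ i ∈ c.support, ε i) * lam ^ #c.support) := by
    intro c hc
    rw [(Perm.mem_cycleFactorsFinset_iff.1 hc).1.sign_mul_prod_neg, prod_mul_distrib, prod_const,
      mul_comm]
  have hdisj : (ρ.cycleFactorsFinset : Set (Perm α)).PairwiseDisjoint Perm.support :=
    ρ.cycleFactorsFinset_pairwise_disjoint.mono' fun _ _ => Perm.Disjoint.disjoint_support
  rw [prod_one_sub_smul_diagonal_mul_permMatrix_apply lam ε σ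
      (Perm.cycleFactorsFinset_subset_iff.1 hρ), Perm.sign_eq_prod_cycleFactorsFinset,
    Perm.support_eq_biUnion_cycleFactorsFinset, prod_biUnion hdisj, Units.smul_def, zsmul_eq_mul,
    ← mul_assoc, ← prod_congr rfl hcycle, prod_mul_distrib, Units.coe_prod, Int.cast_prod]

end SignedPermMatrix

theorem det_one_sub_smul_signedPermMatrix_general {R : Type*} [CommRing R] (n : ℕ) (lam : R)
    (σ : Equiv.Perm (Fin n)) (ε : Fin n → R) :
    ((1 : Matrix (Fin n) (Fin n) R) -
        lam • (Matrix.diagonal ε * σ.permMatrix R)).det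
      = (∏ c ∈ σ.cycleFactorsFinset,
            (1 - (∏ i ∈ c.support, ε i) * lam ^ c.support.card)) *
          ∏ i ∈ Finset.univ \ σ.support, (1 - ε i * lam) := by
  have hexpand : ∏ c ∈ σ.cycleFactorsFinset, (1 - (∏ i ∈ c.support, ε i) * lam ^ #c.support) =
      ∑ S ∈ σ.cycleFactorsFinset.powerset,
        ∏ c ∈ S, -((∏ i ∈ c.support, ε i) * lam ^ #c.support) := by
    simp only [sub_eq_add_neg, prod_one_add]
  have hvanish : ∀ ρ ∈ (univ : Finset (Perm (Fin n))),
      Perm.sign ρ • ∏ i, (1 - lam • (diagonal ε * σ.permMatrix R)) i (ρ i) ≠ 0 →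
        ρ.cycleFactorsFinset ⊆ σ.cycleFactorsFinset := by
    intro ρ _ hρ
    refine Perm.cycleFactorsFinset_subset_iff.2 fun i => ?_
    by_contra! hi
    have hzero : (1 - lam • (diagonal ε * σ.permMatrix R)) i (ρ i) = 0 :=
      one_sub_smul_diagonal_mul_permMatrix_apply_eq_zero lam ε σ hi.1.symm hi.2.symm
    exact hρ (by rw [prod_eq_zero (mem_univ i) hzero, smul_zero])
  rw [← det_transpose, det_apply, hexpand, sum_mul]
  simp only [transpose_apply]
  rw [← sum_filter_of_ne hvanish]
  refine sum_nbij Perm.cycleFactorsFinset (fun ρ hρ => mem_powerset.2 (mem_filter.1 hρ).2)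
    Perm.cycleFactorsFinset_injective.injOn (fun S hS => ?_) fun ρ hρ =>
      sign_smul_prod_one_sub_smul_diagonal_mul_permMatrix_apply lam ε σ (mem_filter.1 hρ).2
  obtain ⟨ρ, rfl⟩ := Perm.exists_cycleFactorsFinset_eq (mem_powerset.1 hS)
  exact ⟨ρ, mem_filter.2 ⟨mem_univ ρ, mem_powerset.1 hS⟩, rfl⟩

/-- **Characteristic polynomial of a signed permutation matrix.**
For `ε : Fin n → R` with values in `{1, −1}` and `σ ∈ S_n`,
`det(I_n − λ·D_ε·M_σ) = ∏_c (1 − s(c)·λ^{ℓ(c)})`, the product over the cycles `c`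
of `σ` (fixed points counted as cycles of length 1), where `ℓ(c)` is the length
of `c` and `s(c) = ∏_{i ∈ c} ε i` is the sign of the cycle. -/
theorem det_one_sub_smul_signedPermMatrix {R : Type*} [CommRing R] (n : ℕ) (lam : R)
    (σ : Equiv.Perm (Fin n)) (ε : Fin n → R) (hε : ∀ i, ε i = 1 ∨ ε i = -1) :
    ((1 : Matrix (Fin n) (Fin n) R) -
        lam • (Matrix.diagonal ε * σ.permMatrix R)).det
      = (∏ c ∈ σ.cycleFactorsFinset,
            (1 - (∏ i ∈ c.support, ε i) * lam ^ c.support.card)) *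
          ∏ i ∈ Finset.univ \ σ.support, (1 - ε i * lam) :=
  det_one_sub_smul_signedPermMatrix_general n lam σ ε
end

section
/- Let n ≥ 1 and r ≥ 1, and consider the polynomial q(X) = ∑_{σ ∈ S_n} det(I_n − X·M_σ)^r in ℚ[X]. Then (1 − X)^r divides q(X), and the quotient polynomial q(X)/(1 − X)^r takes the value n!·n^{r−1} at X = 1. (This computes the Euler characteristic χ(ℳ_r SL(n,ℂ)) = n^{r−1} of the SL(n,ℂ)-character variety of ℤ^r.) -/
/-!
Write `D_σ = det (1 - X • P_σ)`, the reversed characteristic polynomial of the permutation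
matrix `P_σ`. As `P_σ` fixes the all-ones vector, `1 - X ∣ D_σ`. If `σ` has two or more cycles,
`P_σ` is block diagonal along a `σ`-invariant splitting, so `(1 - X)^2 ∣ D_σ` and `D_σ / (1 - X)`
vanishes at `1`. If `σ` is a single `n`-cycle, only the identity and `σ⁻¹` survive in the Leibniz
expansion, so `D_σ = 1 - X^n` and `D_σ / (1 - X) = 1 + X + ⋯ + X^(n-1)` takes the value `n` at `1`.
Hence `q / (1 - X)^r` takes at `1` the value `(n - 1)! · n^r = n! · n^(r-1)`, as there are
`(n - 1)!` such cycles.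
-/

open Polynomial Matrix Equiv Finset

namespace Matrix

variable {m n R : Type*} [Fintype m] [DecidableEq m] [Fintype n] [DecidableEq n] [CommRing R]

lemma eval_one_charpolyRev (M : Matrix n n R) : M.charpolyRev.eval 1 = det (1 - M) := by
  rw [charpolyRev, ← coe_evalRingHom, RingHom.map_det]
  congr 1
  ext i j
  simp [one_apply, apply_ite]

lemma charpolyRev_reindex (e : m ≃ n) (M : Matrix m m R) :
    (reindex e e M).charpolyRev = M.charpolyRev := by
  rw [charpolyRev, charpolyRev, ← det_reindex_self e]
  congr 1
  ext i j
  simp [one_apply]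

lemma charpolyRev_fromBlocks_zero₁₂ (A : Matrix m m R) (C : Matrix n m R) (D : Matrix n n R) :
    (fromBlocks A 0 C D).charpolyRev = A.charpolyRev * D.charpolyRev := by
  rw [charpolyRev, fromBlocks_map, Matrix.map_zero _ C_0, ← fromBlocks_one, fromBlocks_smul,
    smul_zero, sub_eq_add_neg, fromBlocks_neg, fromBlocks_add, neg_zero, add_zero,
    det_fromBlocks_zero₁₂, charpolyRev, charpolyRev, sub_eq_add_neg, sub_eq_add_neg]

end Matrix

lemma Polynomial.one_sub_X_dvd_iff {R : Type*} [CommRing R] {p : R[X]} :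
    1 - X ∣ p ↔ p.eval 1 = 0 := by
  rw [← neg_dvd, neg_sub, ← C_1, dvd_iff_isRoot, IsRoot]

namespace Equiv.Perm

variable {α : Type*}

lemma isCycleOn_univ_iff (σ : Perm α) : σ.IsCycleOn .univ ↔ ∀ x y, σ.SameCycle x y := by
  simp [IsCycleOn, σ.bijective]

lemma eq_one_or_eq_inv_of_isCycleOn_univ [Finite α] {σ τ : Perm α} (hσ : σ.IsCycleOn .univ)
    (hτ : ∀ i, τ i = i ∨ σ (τ i) = i) : τ = 1 ∨ τ = σ⁻¹ := by
  refine or_iff_not_imp_left.mpr fun hτ1 => ?_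
  obtain ⟨a, ha⟩ : ∃ a, τ a ≠ a := by simpa [Equiv.ext_iff] using hτ1
  have hτ_inv : ∀ i, τ i ≠ i → τ i = σ⁻¹ i := fun i hi =>
    eq_inv_iff_eq.mpr ((hτ i).resolve_left hi)
  -- the points moved by `τ` form a `σ⁻¹`-invariant set
  have hmoved : ∀ k : ℕ, τ ((σ⁻¹ ^ k) a) ≠ (σ⁻¹ ^ k) a := by
    intro k
    induction k with
    | zero => simpa using ha
    | succ k ih =>
      rw [pow_succ', mul_apply, ← hτ_inv _ ih]
      exact fun h => ih (τ.injective h ▸ h)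
  ext x
  obtain ⟨k, rfl⟩ := hσ.inv.exists_pow_eq' Set.finite_univ (Set.mem_univ a) (Set.mem_univ x)
  exact hτ_inv _ (hmoved k)

variable [DecidableEq α]

lemma one_sub_X_smul_permMatrix_apply {R : Type*} [CommRing R] (σ : Perm α) (i j : α) :
    (1 - (X : R[X]) • σ.permMatrix R[X]) i j =
      (if i = j then 1 else 0) - if σ i = j then X else 0 := by
  simp [Matrix.one_apply, PEquiv.toMatrix_apply]

variable [Fintype α]

lemma isCycleOn_univ_iff_cycleType [Nontrivial α] (σ : Perm α) :
    σ.IsCycleOn .univ ↔ σ.cycleType = {Fintype.card α} := by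
  constructor
  · intro hσ
    have hcycle : σ.IsCycle :=
      isCycle_iff_exists_isCycleOn.mpr ⟨_, Set.nontrivial_univ, hσ, fun _ _ => trivial⟩
    have hsupport : σ.support = univ :=
      eq_univ_of_forall fun _ => mem_support.mpr (hσ.apply_ne Set.nontrivial_univ trivial)
    rw [hcycle.cycleType, hsupport, card_univ]
  · intro hσ
    have hcycle : σ.IsCycle := card_cycleType_eq_one.mp (by simp [hσ])
    have hsupport : σ.support = univ :=
      eq_univ_of_card _ (by rw [← sum_cycleType, hσ, Multiset.sum_singleton])
    convert hcycle.isCycleOn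
    ext x
    simpa using mem_support.mp (hsupport ▸ mem_univ x)

open Classical in
lemma card_isCycleOn_univ [Nonempty α] :
    #{σ : Perm α | σ.IsCycleOn .univ} = (Fintype.card α - 1).factorial := by
  rcases subsingleton_or_nontrivial α with hα | hα
  · have : Unique α := uniqueOfSubsingleton (Classical.arbitrary α)
    simp [isCycleOn_of_subsingleton]
  · simp_rw [isCycleOn_univ_iff_cycleType]
    rw [card_of_cycleType_singleton Fintype.one_lt_card le_rfl, Nat.choose_self, mul_one]

variable {R : Type*} [CommRing R]

lemma charpolyRev_permMatrix (σ : Perm α) :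
    (σ.permMatrix R).charpolyRev = det (1 - (X : R[X]) • σ.permMatrix R[X]) := by
  rw [charpolyRev]
  congr 3
  ext i j
  simp [PEquiv.toMatrix_apply, apply_ite]

lemma charpolyRev_permMatrix_eq_mul_of_invariant (σ : Perm α) {p : α → Prop} [DecidablePred p]
    (hp : ∀ x, p (σ x) ↔ p x) :
    (σ.permMatrix R).charpolyRev = ((σ.subtypePerm hp).permMatrix R).charpolyRev *
      ((σ.subtypePerm (p := fun x => ¬p x) fun x => (hp x).not).permMatrix R).charpolyRev := by
  rw [← charpolyRev_reindex (sumCompl p).symm, ← charpolyRev_fromBlocks_zero₁₂ _ 0]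
  congr 1
  ext (i | i) (j | j) <;> simp [PEquiv.toMatrix_apply, Subtype.ext_iff]
  · exact fun h => (j.2 (h ▸ (hp i).2 i.2)).elim
  · exact fun h => (i.2 ((hp i).1 (h ▸ j.2))).elim

lemma det_one_sub_X_smul_permMatrix_of_isCycleOn_univ [Nontrivial α] {σ : Perm α}
    (hσ : σ.IsCycleOn .univ) :
    det (1 - (X : R[X]) • σ.permMatrix R[X]) = 1 - X ^ Fintype.card α := by
  set A := 1 - (X : R[X]) • σ.permMatrix R[X] with hA
  have hfix : ∀ i, σ i ≠ i := fun _ => hσ.apply_ne Set.nontrivial_univ trivial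
  have hvanish : ∀ τ ∈ (univ : Finset (Perm α)), τ ∉ ({1, σ⁻¹} : Finset (Perm α)) →
      sign τ • ∏ i, A (τ i) i = 0 := by
    intro τ _ hτ
    obtain ⟨i, hi⟩ : ∃ i, A (τ i) i = 0 := by
      by_contra! h
      have hτ' : ∀ i, τ i = i ∨ σ (τ i) = i := fun i => by
        by_contra! hne
        exact h i <| by
          rw [hA, one_sub_X_smul_permMatrix_apply, if_neg hne.1, if_neg hne.2, sub_zero]
      exact hτ (by simpa using eq_one_or_eq_inv_of_isCycleOn_univ hσ hτ')
    rw [prod_eq_zero (f := fun j => A (τ j) j) (mem_univ i) hi, smul_zero]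
  have hσ_inv : σ⁻¹ ≠ 1 := by
    obtain ⟨i⟩ := ‹Nontrivial α›.to_nonempty
    exact fun h => hfix i (by simpa using congr($h⁻¹ i))
  have hdiag : ∀ i, A i i = 1 := fun i => by simp [hA, hfix]
  have hsub : ∀ i, A (σ⁻¹ i) i = -X := fun i => by
    rw [hA, one_sub_X_smul_permMatrix_apply, if_neg fun h => hfix i (inv_eq_iff_eq.mp h).symm,
      if_pos (show σ (σ⁻¹ i) = i from σ.apply_symm_apply i), zero_sub]
  have hsign : sign σ⁻¹ = -(-1) ^ Fintype.card α := by
    rw [sign_inv, sign_of_cycleType, (isCycleOn_univ_iff_cycleType σ).mp hσ]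
    simp [pow_succ]
  rw [det_apply, ← sum_subset (subset_univ _) hvanish, sum_pair hσ_inv.symm]
  simp only [one_apply, hdiag, hsub, prod_const, card_univ, sign_one, one_smul, one_pow, hsign]
  rw [Units.smul_def, zsmul_eq_mul, neg_pow (X : R[X])]
  push_cast
  rw [neg_mul, ← mul_assoc, ← mul_pow]
  norm_num
  ring

lemma charpolyRev_permMatrix_of_isCycleOn_univ [Nonempty α] {σ : Perm α}
    (hσ : σ.IsCycleOn .univ) : (σ.permMatrix R).charpolyRev = 1 - X ^ Fintype.card α := by
  rw [charpolyRev_permMatrix]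
  rcases subsingleton_or_nontrivial α with hα | hα
  · have : Unique α := uniqueOfSubsingleton (Classical.arbitrary α)
    simp [det_unique, Subsingleton.elim (σ default) default]
  · exact det_one_sub_X_smul_permMatrix_of_isCycleOn_univ hσ

variable [IsDomain R]

lemma one_sub_X_dvd_charpolyRev_permMatrix [Nonempty α] (σ : Perm α) :
    1 - X ∣ (σ.permMatrix R).charpolyRev := by
  rw [one_sub_X_dvd_iff, eval_one_charpolyRev, ← exists_mulVec_eq_zero_iff]
  exact ⟨1, one_ne_zero, by simp [sub_mulVec, permMatrix_mulVec]⟩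

lemma sq_one_sub_X_dvd_charpolyRev_permMatrix {σ : Perm α} (hσ : ¬σ.IsCycleOn .univ) :
    (1 - X) ^ 2 ∣ (σ.permMatrix R).charpolyRev := by
  obtain ⟨a, b, hab⟩ : ∃ a b, ¬σ.SameCycle a b := by simpa [isCycleOn_univ_iff] using hσ
  have : Nonempty {x // σ.SameCycle a x} := ⟨⟨a, .refl σ a⟩⟩
  have : Nonempty {x // ¬σ.SameCycle a x} := ⟨⟨b, hab⟩⟩
  rw [charpolyRev_permMatrix_eq_mul_of_invariant σ (p := σ.SameCycle a)
    fun _ => sameCycle_apply_right, sq]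
  exact mul_dvd_mul (one_sub_X_dvd_charpolyRev_permMatrix _)
    (one_sub_X_dvd_charpolyRev_permMatrix _)

open Classical in
lemma exists_charpolyRev_permMatrix_eq_one_sub_X_mul [Nonempty α] (σ : Perm α) :
    ∃ c : R[X], (σ.permMatrix R).charpolyRev = (1 - X) * c ∧
      c.eval 1 = if σ.IsCycleOn .univ then (Fintype.card α : R) else 0 := by
  obtain ⟨c, hc⟩ := one_sub_X_dvd_charpolyRev_permMatrix (R := R) σ
  refine ⟨c, hc, ?_⟩
  have h1X : (1 - X : R[X]) ≠ 0 := fun h => by simpa using congr(eval 0 $h)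
  split_ifs with hσ
  · have hgeom : c = ∑ i ∈ range (Fintype.card α), X ^ i := by
      apply mul_left_cancel₀ h1X
      rw [← hc, charpolyRev_permMatrix_of_isCycleOn_univ hσ, mul_neg_geom_sum]
    simp [hgeom, eval_finsetSum]
  · have hsq := sq_one_sub_X_dvd_charpolyRev_permMatrix (R := R) hσ
    rw [hc, sq] at hsq
    exact one_sub_X_dvd_iff.mp ((mul_dvd_mul_iff_left h1X).mp hsq)

end Equiv.Perm

/-- **Euler characteristic of the `SL(n,ℂ)`-character variety of `ℤ^r`.**
The polynomial `q(X) = ∑_{σ ∈ S_n} det(I_n − X·M_σ)^r ∈ ℚ[X]` is divisible by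
`(1 − X)^r`, and the quotient evaluates at `X = 1` to `n!·n^{r−1}`
(so that `χ(ℳ_r SL(n,ℂ)) = n^{r−1}`). -/
theorem euler_char_SLn (n r : ℕ) (hn : 1 ≤ n) (hr : 1 ≤ r) :
    ∃ q' : Polynomial ℚ,
      (∑ σ : Equiv.Perm (Fin n),
          ((1 : Matrix (Fin n) (Fin n) (Polynomial ℚ)) -
            (Polynomial.X : Polynomial ℚ) • σ.permMatrix (Polynomial ℚ)).det ^ r)
        = (1 - Polynomial.X) ^ r * q' ∧
      q'.eval 1 = (n.factorial : ℚ) * (n : ℚ) ^ (r - 1) := by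
  classical
  have : Nonempty (Fin n) := ⟨⟨0, hn⟩⟩
  choose c hc hc_eval using
    Perm.exists_charpolyRev_permMatrix_eq_one_sub_X_mul (α := Fin n) (R := ℚ)
  refine ⟨∑ σ, c σ ^ r, ?_, ?_⟩
  · simp_rw [← Perm.charpolyRev_permMatrix, hc, mul_pow, mul_sum]
  · simp_rw [eval_finsetSum, eval_pow, hc_eval, ite_pow, zero_pow (Nat.one_le_iff_ne_zero.mp hr)]
    rw [sum_ite, sum_const_zero, add_zero, sum_const, Perm.card_isCycleOn_univ, Fintype.card_fin,
      nsmul_eq_mul]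
    obtain ⟨m, rfl⟩ := Nat.exists_eq_add_of_le' hn
    obtain ⟨s, rfl⟩ := Nat.exists_eq_add_of_le' hr
    push_cast [Nat.factorial_succ]
    ring
end

section
/- Let n ≥ 1 and let λ be a variable (or an element of any commutative ring). Then ∑_{σ ∈ S_n} det(I_n + λ·M_σ)^2 = n!·(1 + λ)^2·(1 + λ^2 + λ^4 + ⋯ + λ^{2n−2}) = n!·(1+λ)^2·∑_{k=0}^{n−1} λ^{2k}. (Dividing by n! and setting λ = tuv, this gives the mixed Hodge polynomial of the GL(n,ℂ)-character variety of ℤ^2: μ(t,u,v) = (1+tuv)^2·(1+(tuv)^2+⋯+(tuv)^{2n−2}).) -/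
/-!
Expanding `det (1 + c • P_σ)` multilinearly in the rows gives `∑_S c ^ |S| ε_σ(S)`, where
`ε_σ(S)` is the sign of `σ` on `S` if `S` is `σ`-stable and `0` otherwise. After squaring and
summing over `σ`, everything is governed by the correlations `∑_σ ε_σ(S) ε_σ(T)`. Composing `σ`
with a transposition of two points of `S \ T` flips `ε_σ(S)` and fixes `ε_σ(T)`, so a correlation
vanishes unless `S` and `T` differ by at most one point on each side; in that case it counts the
permutations stabilising both `S` and `T`, namely `|S ∩ T|! (n - |S ∪ T|)!`. Writing
`T = (S \ A) ∪ B` with `A ⊆ S`, `B ⊆ Sᶜ` then splits the sum over `T` into a product of two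
sums with at most two nonzero terms each.
-/

open Finset Matrix Nat

namespace Finset

variable {α M : Type*} [AddCommMonoid M]

theorem sum_powerset_apply_card_of_eq_zero_of_one_lt (s : Finset α) {g : ℕ → M}
    (hg : ∀ k, 1 < k → g k = 0) : ∑ A ∈ s.powerset, g #A = g 0 + #s • g 1 := by
  rw [sum_powerset_apply_card, sum_eq_add 0 1 zero_ne_one
    (fun k _ hk => by rw [hg k (by omega), smul_zero]) (fun h => by simp at h)
    (fun h => by simp [show #s = 0 by simpa using h])]
  simp

theorem sum_eq_sum_powerset_sum_powerset_compl [Fintype α] [DecidableEq α] (S : Finset α)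
    (f : Finset α → M) : ∑ T, f T = ∑ A ∈ S.powerset, ∑ B ∈ Sᶜ.powerset, f (S \ A ∪ B) := by
  rw [← sum_product']
  refine (sum_nbij' (fun p => S \ p.1 ∪ p.2) (fun T => (S \ T, T \ S)) (by simp)
    (fun T _ => ?_) (fun p hp => ?_) (fun T _ => ?_) (by simp)).symm
  · simp only [mem_product, mem_powerset]
    exact ⟨sdiff_subset, fun x hx => by simp_all⟩
  · simp only [mem_product, mem_powerset] at hp
    ext x <;> grind [mem_compl]
  · ext x
    simp only [mem_sdiff, mem_union]
    tauto

end Finset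

namespace Equiv.Perm

variable {ι : Type*} [DecidableEq ι]

theorem apply_eq_self_of_mem_sdiff {σ : Perm ι} {S T : Finset ι} (hS : ∀ x, σ x ∈ S ↔ x ∈ S)
    (hT : ∀ x, σ x ∈ T ↔ x ∈ T) (hST : #(S \ T) ≤ 1) {x : ι} (hx : x ∈ S \ T) : σ x = x := by
  rw [mem_sdiff] at hx
  exact card_le_one.mp hST _ (mem_sdiff.mpr ⟨(hS x).mpr hx.1, fun h => hx.2 ((hT x).mp h)⟩) _
    (mem_sdiff.mpr hx)

variable [Fintype ι] {R : Type*} [CommRing R]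

/-- The sign of `σ` restricted to `S` when `S` is `σ`-stable, and `0` otherwise. -/
def signOn (R : Type*) [CommRing R] (σ : Perm ι) (S : Finset ι) : R :=
  (Matrix.of fun i => (Pi.single (S.piecewise σ id i) 1 : ι → R)).det

theorem det_one_add_smul_permMatrix (σ : Perm ι) (c : R) :
    (1 + c • σ.permMatrix R).det = ∑ S : Finset ι, c ^ #S * signOn R σ S := by
  set u : ι → ι → R := fun i => Pi.single i 1
  have hrows : 1 + c • σ.permMatrix R = Matrix.of ((fun i => c • u (σ i)) + u) := by
    ext i j
    rw [Matrix.add_apply, Matrix.smul_apply, Matrix.one_apply, add_comm]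
    simp [u, Pi.single_apply, eq_comm]
  rw [hrows]
  change detRowAlternating ((fun i => c • u (σ i)) + u) = _
  rw [AlternatingMap.map_add_univ]
  refine sum_congr rfl fun S _ => ?_
  have hS : S.piecewise (u ∘ σ) u = fun i => Pi.single (S.piecewise σ id i) 1 := by
    funext i
    by_cases hi : i ∈ S <;> simp [hi, u]
  have hm : S.piecewise (fun i => c • u (σ i)) u =
      S.piecewise (fun i => c • S.piecewise (u ∘ σ) u i) (S.piecewise (u ∘ σ) u) :=
    S.piecewise_congr (fun i hi => by simp [hi]) fun i hi => by simp [hi]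
  rw [hm, ← AlternatingMap.coe_multilinearMap, MultilinearMap.map_piecewise_smul, prod_const,
    smul_eq_mul, AlternatingMap.coe_multilinearMap, hS]
  rfl

theorem det_of_single_eq_sign (τ : Perm ι) :
    (Matrix.of fun i => (Pi.single (τ i) 1 : ι → R)).det = sign τ := by
  have hone : (Matrix.of fun i => (Pi.single i 1 : ι → R)) = 1 := by
    ext i j
    rw [of_apply, one_eq_pi_single]
  change ((Matrix.of fun i => (Pi.single i 1 : ι → R)).submatrix τ id).det = _
  rw [det_permute, hone, det_one, mul_one]

theorem signOn_eq_sign {σ : Perm ι} {S : Finset ι} (h : ∀ x, σ x ∈ S ↔ x ∈ S) :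
    signOn R σ S = sign (σ.subtypePerm h) := by
  have hpw : S.piecewise σ id = ofSubtype (σ.subtypePerm h) := by
    funext i
    by_cases hi : i ∈ S
    · rw [piecewise_eq_of_mem _ _ _ hi, ofSubtype_subtypePerm_of_mem h hi]
    · rw [piecewise_eq_of_notMem _ _ _ hi, ofSubtype_subtypePerm_of_not_mem h hi, id]
  rw [signOn, hpw, det_of_single_eq_sign, sign_ofSubtype]

theorem signOn_mul_self_of_stable {σ : Perm ι} {S : Finset ι} (h : ∀ x, σ x ∈ S ↔ x ∈ S) :
    signOn R σ S * signOn R σ S = 1 := by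
  rw [signOn_eq_sign h, ← Int.cast_mul, ← Units.val_mul, Int.units_mul_self, Units.val_one,
    Int.cast_one]

theorem signOn_eq_zero_of_not_stable {σ : Perm ι} {S : Finset ι} (h : ¬ ∀ x, σ x ∈ S ↔ x ∈ S) :
    signOn R σ S = 0 := by
  obtain ⟨x, hx, hσx⟩ : ∃ x ∈ S, σ x ∉ S := by
    by_contra! hmaps
    have hmap : S.map σ.toEmbedding = S :=
      map_eq_of_subset fun y hy => by
        obtain ⟨x, hx, rfl⟩ := mem_map.mp hy
        exact hmaps x hx
    refine h fun x => ⟨fun hσx => ?_, hmaps x⟩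
    rw [← hmap] at hσx
    simpa using hσx
  refine det_zero_of_row_eq (i := x) (j := σ x) (fun hxx => hσx (hxx ▸ hx)) ?_
  change (Pi.single (S.piecewise σ id x) 1 : ι → R) = Pi.single (S.piecewise σ id (σ x)) 1
  rw [piecewise_eq_of_mem _ _ _ hx, piecewise_eq_of_notMem _ _ _ hσx, id]

theorem signOn_mul_swap_of_mem {σ : Perm ι} {S : Finset ι} {a b : ι} (hab : a ≠ b) (ha : a ∈ S)
    (hb : b ∈ S) : signOn R (σ * swap a b) S = -signOn R σ S := by
  have hpw : S.piecewise (σ * swap a b) id = S.piecewise σ id ∘ swap a b := by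
    funext i
    by_cases hi : i ∈ S
    · have hsi : swap a b i ∈ S := by
        rcases eq_or_ne i a with rfl | hia
        · simpa using hb
        rcases eq_or_ne i b with rfl | hib
        · simpa using ha
        · rwa [swap_apply_of_ne_of_ne hia hib]
      simp [hi, hsi]
    · have hia : i ≠ a := fun h => hi (h ▸ ha)
      have hib : i ≠ b := fun h => hi (h ▸ hb)
      simp [hi, swap_apply_of_ne_of_ne hia hib]
  rw [signOn, hpw]
  change ((Matrix.of fun i => (Pi.single (S.piecewise σ id i) 1 : ι → R)).submatrix
    (swap a b) id).det = _
  rw [det_permute, sign_swap hab, signOn]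
  simp

theorem signOn_mul_swap_of_notMem {σ : Perm ι} {S : Finset ι} {a b : ι} (ha : a ∉ S)
    (hb : b ∉ S) : signOn R (σ * swap a b) S = signOn R σ S := by
  have hpw : S.piecewise (σ * swap a b) id = S.piecewise σ id :=
    S.piecewise_congr (fun i hi => by
      rw [mul_apply, swap_apply_of_ne_of_ne (ne_of_mem_of_not_mem hi ha)
        (ne_of_mem_of_not_mem hi hb)]) fun _ _ => rfl
  rw [signOn, hpw, signOn]

theorem sum_signOn_mul_signOn_eq_zero {S T : Finset ι} (h : 2 ≤ #(S \ T)) :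
    ∑ σ : Perm ι, signOn R σ S * signOn R σ T = 0 := by
  obtain ⟨a, ha, b, hb, hab⟩ := one_lt_card.mp h
  rw [mem_sdiff] at ha hb
  refine sum_ninvolution (· * swap a b) (fun σ => ?_) (fun σ _ => ?_) (fun _ => mem_univ _)
    fun σ => by simp [mul_assoc]
  · rw [signOn_mul_swap_of_mem hab ha.1 hb.1, signOn_mul_swap_of_notMem ha.2 hb.2]
    ring
  · simp [swap_eq_one_iff, hab]

theorem signOn_eq_of_subset {σ : Perm ι} {S V : Finset ι} (hVS : V ⊆ S)
    (hfix : ∀ x ∈ S \ V, σ x = x) : signOn R σ S = signOn R σ V := by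
  have hpw : S.piecewise σ id = V.piecewise σ id := by
    funext x
    by_cases hxV : x ∈ V
    · simp [hxV, hVS hxV]
    · by_cases hxS : x ∈ S
      · simp [hxS, hxV, hfix x (mem_sdiff.mpr ⟨hxS, hxV⟩)]
      · simp [hxS, hxV]
  rw [signOn, hpw, signOn]

theorem signOn_mul_signOn {S T : Finset ι} (hST : #(S \ T) ≤ 1) (hTS : #(T \ S) ≤ 1)
    (σ : Perm ι) : signOn R σ S * signOn R σ T =
      if (∀ x, σ x ∈ S ↔ x ∈ S) ∧ ∀ x, σ x ∈ T ↔ x ∈ T then 1 else 0 := by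
  split_ifs with h
  · obtain ⟨hS, hT⟩ := h
    have hV : ∀ x, σ x ∈ S ∩ T ↔ x ∈ S ∩ T := fun x => by simp [mem_inter, hS, hT]
    rw [signOn_eq_of_subset (V := S ∩ T) inter_subset_left fun x hx =>
        apply_eq_self_of_mem_sdiff hS hT hST (by simpa using hx),
      signOn_eq_of_subset (S := T) (V := S ∩ T) inter_subset_right fun x hx =>
        apply_eq_self_of_mem_sdiff hT hS hTS (by simpa using hx),
      signOn_mul_self_of_stable hV]
  · rcases not_and_or.mp h with h | h
    · rw [signOn_eq_zero_of_not_stable h, zero_mul]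
    · rw [signOn_eq_zero_of_not_stable h, mul_zero]

theorem card_stable_and_stable (S T : Finset ι) :
    Fintype.card {σ : Perm ι // (∀ x, σ x ∈ S ↔ x ∈ S) ∧ ∀ x, σ x ∈ T ↔ x ∈ T} =
      (#(S ∩ T))! * (#(S \ T))! * (#(T \ S))! * (#(S ∪ T)ᶜ)! := by
  set f : ι → Bool × Bool := fun x => (x ∈ S, x ∈ T)
  have hstab : ∀ σ : Perm ι,
      ((∀ x, σ x ∈ S ↔ x ∈ S) ∧ ∀ x, σ x ∈ T ↔ x ∈ T) ↔ f ∘ σ = f := by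
    intro σ
    simp [f, funext_iff, forall_and]
  have hfiber : ∀ (b c : Bool) (U : Finset ι), (∀ x, x ∈ U ↔ f x = (b, c)) →
      Fintype.card {x // f x = (b, c)} = #U := by
    intro b c U hU
    rw [Fintype.card_subtype]
    congr 1
    ext x
    simp [hU]
  rw [Fintype.card_congr (Equiv.subtypeEquivRight hstab), DomMulAct.stabilizer_card,
    Fintype.prod_prod_type, Fintype.prod_bool, Fintype.prod_bool, Fintype.prod_bool,
    hfiber true true (S ∩ T) (by simp [f]), hfiber true false (S \ T) (by simp [f]),
    hfiber false true (T \ S) (by simp [f, and_comm]), hfiber false false (S ∪ T)ᶜ (by simp [f]),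
    ← mul_assoc]

theorem sum_signOn_mul_signOn (S T : Finset ι) :
    ∑ σ : Perm ι, signOn R σ S * signOn R σ T =
      if #(S \ T) ≤ 1 ∧ #(T \ S) ≤ 1 then (((#(S ∩ T))! * (#(S ∪ T)ᶜ)! : ℕ) : R) else 0 := by
  split_ifs with h
  · rw [sum_congr rfl fun σ _ => signOn_mul_signOn h.1 h.2 σ, sum_boole, ← Fintype.card_subtype,
      card_stable_and_stable, factorial_eq_one.mpr h.1, factorial_eq_one.mpr h.2, mul_one, mul_one]
  · rcases not_and_or.mp h with h | h
    · exact sum_signOn_mul_signOn_eq_zero (by omega)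
    · simp_rw [mul_comm (signOn R _ S)]
      exact sum_signOn_mul_signOn_eq_zero (by omega)

end Equiv.Perm

open Equiv Equiv.Perm

section

variable {ι R : Type*} [Fintype ι] [DecidableEq ι] [CommRing R]

theorem sum_pow_card_mul_sum_signOn_mul_signOn (S : Finset ι) (c : R) :
    ∑ T : Finset ι, c ^ #T * ∑ σ : Perm ι, signOn R σ S * signOn R σ T =
      (c ^ #S * (#S)! + #S • (c ^ (#S - 1) * (#S - 1)!)) *
        ((#Sᶜ)! + #Sᶜ • (c * (#Sᶜ - 1)!)) := by
  set g : ℕ → R := fun k => if k ≤ 1 then c ^ (#S - k) * (#S - k)! else 0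
  set h : ℕ → R := fun k => if k ≤ 1 then c ^ k * (#Sᶜ - k)! else 0
  have hterm : ∀ A ∈ S.powerset, ∀ B ∈ Sᶜ.powerset,
      c ^ #(S \ A ∪ B) * ∑ σ : Perm ι, signOn R σ S * signOn R σ (S \ A ∪ B) = g #A * h #B := by
    intro A hA B hB
    rw [mem_powerset] at hA hB
    have hdisj : Disjoint (S \ A) B := disjoint_compl_right.mono sdiff_subset hB
    have e1 : S \ (S \ A ∪ B) = A := by ext x; grind [mem_compl]
    have e2 : (S \ A ∪ B) \ S = B := by ext x; grind [mem_compl]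
    have e3 : S ∩ (S \ A ∪ B) = S \ A := by ext x; grind [mem_compl]
    have e4 : (S ∪ (S \ A ∪ B))ᶜ = Sᶜ \ B := by ext x; grind [mem_compl]
    rw [sum_signOn_mul_signOn, e1, e2, e3, e4, card_union_of_disjoint hdisj,
      card_sdiff_of_subset hA, card_sdiff_of_subset hB]
    by_cases hA1 : #A ≤ 1 <;> by_cases hB1 : #B ≤ 1 <;>
      simp [g, h, hA1, hB1, pow_add, mul_mul_mul_comm]
  rw [sum_eq_sum_powerset_sum_powerset_compl S,
    sum_congr rfl fun A hA => sum_congr rfl (hterm A hA), ← sum_mul_sum,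
    sum_powerset_apply_card_of_eq_zero_of_one_lt S (g := g) fun k hk => if_neg (by omega),
    sum_powerset_apply_card_of_eq_zero_of_one_lt Sᶜ (g := h) fun k hk => if_neg (by omega)]
  simp [g, h]

theorem sq_one_add_mul_sum_range_pow_two_mul (c : R) (m : ℕ) :
    (1 + c) ^ 2 * ∑ k ∈ range (m + 1), c ^ (2 * k) =
      (1 + c) + (1 + c) ^ 2 * ∑ t ∈ range m, c ^ (2 * t + 1) + c ^ (2 * m + 1) * (1 + c) := by
  induction m with
  | zero => simp; ring
  | succ m ih =>
    rw [sum_range_succ, sum_range_succ (fun t => c ^ (2 * t + 1))]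
    linear_combination ih

theorem sum_range_choose_smul_eq_factorial_mul (c : R) (m : ℕ) :
    ∑ s ∈ range (m + 2), (m + 1).choose s •
      (c ^ s * ((c ^ s * s ! + s • (c ^ (s - 1) * (s - 1)!)) *
        ((m + 1 - s)! + (m + 1 - s) • (c * (m + 1 - s - 1)!)))) =
    (m + 1)! * (1 + c) ^ 2 * ∑ k ∈ range (m + 1), c ^ (2 * k) := by
  rw [sum_range_succ, sum_range_succ', show ∑ t ∈ range m, _ =
      ∑ t ∈ range m, ((m + 1)! * (1 + c) ^ 2 : R) * c ^ (2 * t + 1) from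
    sum_congr rfl fun t ht => ?_, ← mul_sum]
  · simp only [choose_zero_right, choose_self, Nat.sub_zero, Nat.sub_self, Nat.add_sub_cancel,
      pow_zero, zero_smul, one_smul, factorial_zero, Nat.cast_one, one_mul, mul_one, add_zero,
      nsmul_eq_mul, factorial_succ, Nat.cast_mul]
    linear_combination -((m + 1 : ℕ) * m ! : R) * sq_one_add_mul_sum_range_pow_two_mul c m
  · obtain ⟨k, rfl⟩ := Nat.exists_eq_add_of_lt (mem_range.mp ht)
    have hchoose :=
      Nat.choose_mul_factorial_mul_factorial (n := t + k + 1 + 1) (k := t + 1) (by omega)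
    rw [show t + k + 1 + 1 - (t + 1) = k + 1 by omega] at hchoose
    rw [show t + k + 1 + 1 - (t + 1) = k + 1 by omega, ← hchoose]
    simp only [Nat.add_sub_cancel, factorial_succ, nsmul_eq_mul]
    push_cast
    ring

theorem sum_sq_det_one_add_smul_permMatrix [Nonempty ι] (c : R) :
    ∑ σ : Perm ι, (1 + c • σ.permMatrix R).det ^ 2 =
      (Fintype.card ι)! * (1 + c) ^ 2 * ∑ k ∈ range (Fintype.card ι), c ^ (2 * k) := by
  obtain ⟨m, hm⟩ := Nat.exists_eq_succ_of_ne_zero (Fintype.card_ne_zero (α := ι))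
  set F : ℕ → R := fun s => c ^ s * ((c ^ s * s ! + s • (c ^ (s - 1) * (s - 1)!)) *
    ((m + 1 - s)! + (m + 1 - s) • (c * (m + 1 - s - 1)!)))
  calc ∑ σ : Perm ι, (1 + c • σ.permMatrix R).det ^ 2
      = ∑ S : Finset ι, c ^ #S * ∑ T : Finset ι, c ^ #T *
          ∑ σ : Perm ι, signOn R σ S * signOn R σ T := by
        simp_rw [sq, det_one_add_smul_permMatrix, sum_mul_sum, mul_sum]
        rw [sum_comm]
        refine sum_congr rfl fun S _ => ?_
        rw [sum_comm]
        exact sum_congr rfl fun T _ => sum_congr rfl fun σ _ => by ring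
    _ = ∑ S : Finset ι, F #S := by
        simp_rw [sum_pow_card_mul_sum_signOn_mul_signOn, card_compl, hm]
        rfl
    _ = ∑ s ∈ range (m + 2), (m + 1).choose s • F s := by
        rw [← powerset_univ, sum_powerset_apply_card, Finset.card_univ, hm]
    _ = _ := by
        rw [hm]
        exact sum_range_choose_smul_eq_factorial_mul c m

end

/-- **Mixed Hodge polynomial of the `GL(n,ℂ)`-character variety of `ℤ²`.**
For any commutative ring `R`, `n ≥ 1` and `λ ∈ R`:
`∑_{σ ∈ S_n} det(I_n + λ·M_σ)² = n!·(1+λ)²·(1 + λ² + ⋯ + λ^{2n−2})`. -/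
theorem sum_det_sq_eq (R : Type*) [CommRing R] (n : ℕ) (hn : 1 ≤ n) (lam : R) :
    ∑ σ : Equiv.Perm (Fin n),
        ((1 : Matrix (Fin n) (Fin n) R) + lam • σ.permMatrix R).det ^ 2
      = (n.factorial : R) * (1 + lam) ^ 2 *
          ∑ k ∈ Finset.range n, lam ^ (2 * k) := by
  have : NeZero n := ⟨by omega⟩
  simpa using sum_sq_det_one_add_smul_permMatrix (ι := Fin n) lam
end
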